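/- arXiv:1505.04725 — 2 statements merged into one kernel-verified Lean document; each statement's English description precedes it below -/
import Mathlib

section
/- Let (X, 𝒳, μ, (T_g)) be an F₂-system, let X̃ = X × {a, b, a⁻¹, b⁻¹} with the product of μ and the uniform probability measure on the four-element set, and let P be the Markov operator P f̃(x,s) := (1/3) Σ_{s' ≠ s⁻¹} f̃(T_s⁻¹ x, s'). Let π_* f̃(x) := (1/4) Σ_s f̃(x,s) and π* f(x,s) := f(x). Then for every f ∈ L¹(X) and every n ≥ 1, the spherical average 𝒜_n f := (4·3^{n−1})⁻¹ Σ_{|g| = n} f ∘ T_g⁻¹ satisfies 𝒜_n f = π_* Pⁿ π* f. -/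
/-! A reduced word of length `n + 1` in `a, b, a⁻¹, b⁻¹` is a letter `s` followed by a
reduced word of length `n` not beginning with `s⁻¹`, and `T_{(s w)⁻¹} = T_{w⁻¹} ∘ T_{s⁻¹}`.
Hence, by induction, `Pⁿ⁺¹ π^* f (x, s)` is `3⁻ⁿ` times the sum of `f (T_{g⁻¹} x)` over the
reduced words `g` of length `n + 1` beginning with `s`. Reduced words are the elements of `F₂`,
their length being the word length, so averaging over `s` gives `𝒜ₙ₊₁ f`. -/

open MeasureTheory

/-- The four-letter alphabet `{a, b, a⁻¹, b⁻¹}`. -/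
inductive Letter : Type
  | a | b | a' | b'
  deriving DecidableEq

instance : Fintype Letter :=
  ⟨{.a, .b, .a', .b'}, fun x => by cases x <;> simp⟩

instance : MeasurableSpace Letter := ⊤

/-- Formal inverse of a letter. -/
def Letter.inv : Letter → Letter
  | .a => .a' | .a' => .a | .b => .b' | .b' => .b

/-- The group element of `F₂` corresponding to a letter. -/
def Letter.toF2 : Letter → FreeGroup (Fin 2)
  | .a => FreeGroup.of 0
  | .a' => (FreeGroup.of 0)⁻¹
  | .b => FreeGroup.of 1
  | .b' => (FreeGroup.of 1)⁻¹

/-- The spherical averaging operator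
`𝒜_n f(x) = (4·3^{n-1})⁻¹ Σ_{|g| = n} f(T_g⁻¹ x)`. -/
noncomputable def sphAvg {X : Type*} (T : FreeGroup (Fin 2) → X → X) (n : ℕ)
    (f : X → ℝ) (x : X) : ℝ :=
  (4 * 3 ^ (n - 1) : ℝ)⁻¹ *
    ∑ᶠ (g : FreeGroup (Fin 2)) (_ : FreeGroup.norm g = n), f (T g⁻¹ x)

/-- The Markov operator `P f̃(x,s) = (1/3) Σ_{s' ≠ s⁻¹} f̃(T_s⁻¹ x, s')` on the
four-fold cover `X̃ = X × {a,b,a⁻¹,b⁻¹}`. -/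
noncomputable def markovP {X : Type*} (T : FreeGroup (Fin 2) → X → X)
    (F : X × Letter → ℝ) : X × Letter → ℝ :=
  fun p => (3 : ℝ)⁻¹ *
    ∑ s' ∈ Finset.univ.filter (fun s' : Letter => s' ≠ p.2.inv),
      F (T p.2.toF2⁻¹ p.1, s')

/-- The pushforward `π_* f̃(x) = (1/4) Σ_s f̃(x,s)`. -/
noncomputable def pushDown {X : Type*} (F : X × Letter → ℝ) (x : X) : ℝ :=
  (4 : ℝ)⁻¹ * ∑ s : Letter, F (x, s)

namespace Letter

def equivPair : Letter ≃ Fin 2 × Bool where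
  toFun
    | a => (0, true) | a' => (0, false) | b => (1, true) | b' => (1, false)
  invFun p := if p.1 = 0 then (if p.2 then a else a') else (if p.2 then b else b')
  left_inv := by decide
  right_inv := by decide

theorem toF2_eq_mk (s : Letter) : s.toF2 = FreeGroup.mk [equivPair s] := by
  cases s <;> rfl

theorem ne_inv_iff (s s' : Letter) :
    s' ≠ s.inv ↔
      ((equivPair s).1 = (equivPair s').1 → (equivPair s).2 = (equivPair s').2) := by
  revert s s'; decide

theorem card_filter_ne_inv (s : Letter) : (Finset.univ.filter (· ≠ s.inv)).card = 3 := by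
  cases s <;> decide

def IsReduced (l : List Letter) : Prop := l.IsChain fun s s' => s' ≠ s.inv

theorem isReduced_map_equivPair {l : List Letter} :
    FreeGroup.IsReduced (l.map equivPair) ↔ IsReduced l := by
  simp only [FreeGroup.IsReduced, List.isChain_map, IsReduced, ne_inv_iff]

theorem prod_map_toF2_eq_mk (l : List Letter) :
    (l.map toF2).prod = FreeGroup.mk (l.map equivPair) := by
  induction l with
  | nil => rfl
  | cons s l ih => rw [List.map_cons, List.prod_cons, ih, toF2_eq_mk, FreeGroup.mul_mk]; rfl

theorem toWord_prod_map_toF2 {l : List Letter} (hl : IsReduced l) :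
    (l.map toF2).prod.toWord = l.map equivPair := by
  rw [prod_map_toF2_eq_mk, FreeGroup.toWord_mk, (isReduced_map_equivPair.2 hl).reduce_eq]

theorem bijOn_prod_map_toF2 (n : ℕ) :
    Set.BijOn (fun l : List Letter => (l.map toF2).prod)
      {l | IsReduced l ∧ l.length = n} {g | g.norm = n} := by
  refine ⟨fun l ⟨hl, hn⟩ => ?_, fun l₁ ⟨hl₁, _⟩ l₂ ⟨hl₂, _⟩ h => ?_, fun g hg => ?_⟩
  · simp [FreeGroup.norm, toWord_prod_map_toF2 hl, hn]
  · have := congrArg FreeGroup.toWord h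
    rwa [toWord_prod_map_toF2 hl₁, toWord_prod_map_toF2 hl₂,
      List.map_inj_right equivPair.injective] at this
  · have hw : (g.toWord.map equivPair.symm).map equivPair = g.toWord := by simp
    refine ⟨g.toWord.map equivPair.symm, ⟨?_, (List.length_map _).trans hg⟩, ?_⟩
    · rw [← isReduced_map_equivPair, hw]; exact FreeGroup.isReduced_toWord
    · simp only [prod_map_toF2_eq_mk, hw, FreeGroup.mk_toWord]

def reducedWordsFrom : ℕ → Letter → Finset (List Letter)
  | 0, s => {[s]}
  | n + 1, s => (Finset.univ.filter (· ≠ s.inv)).biUnion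
      fun s' => (reducedWordsFrom n s').image (s :: ·)

theorem head?_of_mem_reducedWordsFrom {n : ℕ} {s : Letter} {l : List Letter}
    (h : l ∈ reducedWordsFrom n s) : l.head? = some s := by
  cases n with
  | zero => simp_all [reducedWordsFrom]
  | succ n =>
    simp only [reducedWordsFrom, Finset.mem_biUnion, Finset.mem_image] at h
    obtain ⟨_, _, _, _, rfl⟩ := h
    rfl

theorem mem_reducedWordsFrom {n : ℕ} {s : Letter} {l : List Letter} :
    l ∈ reducedWordsFrom n s ↔ l.head? = some s ∧ l.length = n + 1 ∧ IsReduced l := by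
  induction n generalizing s l with
  | zero =>
    simp only [reducedWordsFrom, Finset.mem_singleton]
    constructor
    · rintro rfl; exact ⟨rfl, rfl, List.isChain_singleton s⟩
    · rintro ⟨hs, hl, -⟩
      obtain ⟨x, rfl⟩ := List.length_eq_one_iff.1 hl
      simpa using hs
  | succ n ih =>
    simp only [reducedWordsFrom, Finset.mem_biUnion, Finset.mem_filter, Finset.mem_univ,
      true_and, Finset.mem_image, ih]
    constructor
    · rintro ⟨s', hs', t, ⟨ht, hlen, hred⟩, rfl⟩
      obtain ⟨t, rfl⟩ : ∃ t', t = s' :: t' := by simpa [List.head?_eq_some_iff] using ht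
      exact ⟨rfl, by simpa using hlen, List.isChain_cons_cons.2 ⟨hs', hred⟩⟩
    · rintro ⟨hs, hlen, hred⟩
      match l, hs, hlen, hred with
      | s :: s' :: t, rfl, hlen, hred =>
        obtain ⟨hs', hred⟩ := List.isChain_cons_cons.1 hred
        exact ⟨s', hs', s' :: t, ⟨rfl, by simpa using hlen, hred⟩, rfl⟩

theorem disjoint_reducedWordsFrom (n : ℕ) {s₁ s₂ : Letter} (hne : s₁ ≠ s₂) :
    Disjoint (reducedWordsFrom n s₁) (reducedWordsFrom n s₂) :=
  Finset.disjoint_left.2 fun _ h₁ h₂ => hne <| by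
    simpa [head?_of_mem_reducedWordsFrom h₁] using head?_of_mem_reducedWordsFrom h₂

theorem sum_reducedWordsFrom_succ {M : Type*} [AddCommMonoid M] (φ : List Letter → M)
    (n : ℕ) (s : Letter) :
    ∑ l ∈ reducedWordsFrom (n + 1) s, φ l =
      ∑ s' ∈ Finset.univ.filter (· ≠ s.inv), ∑ l ∈ reducedWordsFrom n s', φ (s :: l) := by
  rw [reducedWordsFrom, Finset.sum_biUnion]
  · exact Finset.sum_congr rfl fun s' _ =>
      Finset.sum_image fun _ _ _ _ h => List.cons_injective h
  · exact fun s₁ _ s₂ _ hne =>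
      (Finset.disjoint_image List.cons_injective).2 (disjoint_reducedWordsFrom n hne)

theorem finsum_sphere_eq_sum_reducedWordsFrom {M : Type*} [AddCommMonoid M]
    (φ : FreeGroup (Fin 2) → M) (n : ℕ) :
    ∑ᶠ (g : FreeGroup (Fin 2)) (_ : g.norm = n + 1), φ g =
      ∑ s, ∑ l ∈ reducedWordsFrom n s, φ (l.map toF2).prod := by
  have hwords : ((Finset.univ.biUnion (reducedWordsFrom n) : Finset (List Letter)) : Set _) =
      {l | IsReduced l ∧ l.length = n + 1} := by
    ext l
    simp only [Finset.coe_biUnion, Finset.coe_univ, Set.mem_univ, Set.iUnion_true,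
      Set.mem_iUnion, Finset.mem_coe, mem_reducedWordsFrom]
    constructor
    · rintro ⟨_, -, hlen, hred⟩; exact ⟨hred, hlen⟩
    · rintro ⟨hred, hlen⟩
      obtain ⟨s, t, rfl⟩ := List.exists_cons_of_length_eq_add_one hlen
      exact ⟨s, rfl, hlen, hred⟩
  calc ∑ᶠ (g : FreeGroup (Fin 2)) (_ : g.norm = n + 1), φ g
      = ∑ᶠ l ∈ {l | IsReduced l ∧ l.length = n + 1}, φ (l.map toF2).prod :=
        (finsum_mem_eq_of_bijOn _ (bijOn_prod_map_toF2 (n + 1)) fun _ _ => rfl).symm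
    _ = ∑ s, ∑ l ∈ reducedWordsFrom n s, φ (l.map toF2).prod := by
        rw [← hwords, finsum_mem_coe_finset,
          Finset.sum_biUnion fun _ _ _ _ => disjoint_reducedWordsFrom n]

end Letter

open Letter in
theorem markovP_iterate_succ_apply {X : Type*} {T : FreeGroup (Fin 2) → X → X}
    (hTmul : ∀ g h : FreeGroup (Fin 2), T (g * h) = T g ∘ T h) (f : X → ℝ) (n : ℕ)
    (x : X) (s : Letter) :
    (markovP T)^[n + 1] (fun p => f p.1) (x, s) =
      (3 ^ n : ℝ)⁻¹ * ∑ l ∈ reducedWordsFrom n s, f (T (l.map toF2).prod⁻¹ x) := by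
  induction n generalizing x s with
  | zero => simp [markovP, reducedWordsFrom, card_filter_ne_inv]
  | succ n ih =>
    rw [Function.iterate_succ_apply', markovP]
    -- `T (s * w)⁻¹ = T w⁻¹ ∘ T s⁻¹`: one step of `P` prepends the letter `s`.
    simp only [ih, sum_reducedWordsFrom_succ, List.map_cons, List.prod_cons, mul_inv_rev, hTmul,
      Function.comp_apply, Finset.mul_sum, pow_succ]
    ring_nf

theorem sphAvg_eq_markov_iterate_general {X : Type*} (T : FreeGroup (Fin 2) → X → X)
    (hTmul : ∀ g h : FreeGroup (Fin 2), T (g * h) = T g ∘ T h)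
    (f : X → ℝ) (n : ℕ) (hn : 1 ≤ n) :
    sphAvg T n f = pushDown ((markovP T)^[n] (fun p => f p.1)) := by
  obtain ⟨n, rfl⟩ := Nat.exists_eq_add_of_le' hn
  funext x
  simp only [sphAvg, pushDown, Letter.finsum_sphere_eq_sum_reducedWordsFrom,
    markovP_iterate_succ_apply hTmul, Nat.add_sub_cancel, mul_inv, Finset.mul_sum, mul_assoc]

/-- Bufetov's identity: the spherical average `𝒜_n f` equals `π_* Pⁿ π^* f`, where `P`
is the Markov operator on the four-fold cover `X̃ = X × {a,b,a⁻¹,b⁻¹}` and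
`π^* f(x,s) = f(x)`. -/
theorem sphAvg_eq_markov_iterate {X : Type*} [MeasurableSpace X] (μ : Measure X)
    [IsFiniteMeasure μ] (T : FreeGroup (Fin 2) → X → X)
    (hT1 : T 1 = id) (hTmul : ∀ g h : FreeGroup (Fin 2), T (g * h) = T g ∘ T h)
    (hTmp : ∀ g : FreeGroup (Fin 2), MeasurePreserving (T g) μ μ)
    (f : X → ℝ) (hf : Integrable f μ) (n : ℕ) (hn : 1 ≤ n) :
    sphAvg T n f = pushDown ((markovP T)^[n] (fun p => f p.1)) :=
  sphAvg_eq_markov_iterate_general T hTmul f n hn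
end

section
/- Suppose that for every m ∈ ℕ there exists a probability-measure-preserving F₂-system (X_m, μ_m) and a non-negative f_m ∈ L^∞(X_m) with ‖f_m‖_{L¹} ≤ 2^{−m} and sup_n 𝒜_{2n} f_m(x) ≥ 1 − 2^{−m} for all x outside a set of measure 2^{−m}. Then on the product system X = ∏_m X_m with product measure and diagonal (coordinatewise) F₂-action, the function f := Σ_m m·f̃_m (where f̃_m is the lift of f_m to X) lies in L¹(X) and satisfies sup_n 𝒜_{2n} f(x) = +∞ for almost every x ∈ X. -/
/-!
Since `∑ m, ‖m f̃_m‖₁ ≤ ∑ m, m 2^{-m} < ∞`, the series `f = ∑ m, m f̃_m` converges in `L¹`, and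
almost surely it converges at every point of the countable orbit of `x`. The coordinate
projections push the product measure forward to `μ_m`, so by Borel–Cantelli almost every `x`
has `sup_n 𝒜_{2n} f_m(x_m) ≥ 1 - 2^{-m}` for all large `m`. Averaging commutes with the lift
and `f ≥ m f̃_m`, hence `sup_n 𝒜_{2n} f(x) > m / 4` for arbitrarily large `m`.
-/

open MeasureTheory

open Filter
open scoped ENNReal

theorem FreeGroup.finite_setOf_norm_eq {α : Type*} [DecidableEq α] [Finite α] (n : ℕ) :
    {g : FreeGroup α | g.norm = n}.Finite :=
  ((List.finite_length_eq _ n).preimage FreeGroup.toWord_injective.injOn).subset fun _ hg => hg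

section SphericalAverage

variable {X : Type*} (T : FreeGroup (Fin 2) → X → X)

theorem sphAvg_eq_sum (n : ℕ) (f : X → ℝ) (x : X) :
    sphAvg T n f x = (4 * 3 ^ (n - 1) : ℝ)⁻¹ *
      ∑ g ∈ (FreeGroup.finite_setOf_norm_eq n).toFinset, f (T g⁻¹ x) := by
  rw [sphAvg]
  congr 1
  exact finsum_mem_eq_finite_toFinset_sum _ (FreeGroup.finite_setOf_norm_eq n)

theorem measurable_sphAvg [MeasurableSpace X] (hT : ∀ g, Measurable (T g)) (n : ℕ) {f : X → ℝ}
    (hf : Measurable f) : Measurable (sphAvg T n f) := by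
  simp_rw [funext (sphAvg_eq_sum T n f)]
  exact (Finset.measurable_sum _ fun g _ => hf.comp (hT g⁻¹)).const_mul _

theorem measurable_iSup_sphAvg [MeasurableSpace X] (hT : ∀ g, Measurable (T g)) {f : X → ℝ}
    (hf : Measurable f) (r : ℕ → ℕ) : Measurable fun x => ⨆ n, (sphAvg T (r n) f x : EReal) :=
  Measurable.iSup fun n => measurable_coe_real_ereal.comp (measurable_sphAvg T hT (r n) hf)

theorem sphAvg_mono (n : ℕ) {f h : X → ℝ} (x : X) (hle : ∀ g, f (T g⁻¹ x) ≤ h (T g⁻¹ x)) :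
    sphAvg T n f x ≤ sphAvg T n h x := by
  rw [sphAvg_eq_sum, sphAvg_eq_sum]
  gcongr with g
  exact hle g

theorem sphAvg_const_mul (n : ℕ) (c : ℝ) (f : X → ℝ) (x : X) :
    sphAvg T n (fun y => c * f y) x = c * sphAvg T n f x := by
  rw [sphAvg_eq_sum, sphAvg_eq_sum, ← Finset.mul_sum, mul_left_comm]

theorem sphAvg_le_sphAvg_tsum {ι : Type*} (n : ℕ) {u : ι → X → ℝ} (hu : ∀ i y, 0 ≤ u i y)
    {x : X} (hsum : ∀ g, Summable fun i => u i (T g⁻¹ x)) (i : ι) :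
    sphAvg T n (u i) x ≤ sphAvg T n (fun y => ∑' j, u j y) x :=
  sphAvg_mono T n x fun g => (hsum g).le_tsum i fun j _ => hu j _

end SphericalAverage

theorem sphAvg_pi_comp_eval {ι : Type*} {X : ι → Type*} (T : ∀ i, FreeGroup (Fin 2) → X i → X i)
    (n : ℕ) (i : ι) (φ : X i → ℝ) (x : ∀ i, X i) :
    sphAvg (fun g y k => T k g (y k)) n (fun y => φ (y i)) x = sphAvg (T i) n φ (x i) :=
  rfl

theorem EReal.iSup_coe_eq_top_of_forall_exists_lt {ι : Type*} {a : ι → ℝ}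
    (h : ∀ c : ℝ, ∃ i, c < a i) : ⨆ i, (a i : EReal) = ⊤ := by
  refine iSup_eq_top.2 fun b hb => ?_
  obtain ⟨c, hbc, -⟩ := EReal.lt_iff_exists_real_btwn.1 hb
  obtain ⟨i, hi⟩ := h c
  exact ⟨i, hbc.trans (EReal.coe_lt_coe_iff.2 hi)⟩

theorem MeasureTheory.integrable_tsum {α E ι : Type*} [MeasurableSpace α] {μ : Measure α}
    [NormedAddCommGroup E] [CompleteSpace E] [Countable ι] {F : ι → α → E}
    (hF : ∀ i, AEStronglyMeasurable (F i) μ) (hF' : ∑' i, ∫⁻ a, ‖F i a‖ₑ ∂μ ≠ ∞) :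
    Integrable (fun a => ∑' i, F i a) μ := by
  refine ⟨AEStronglyMeasurable.tsum hF, ?_⟩
  calc ∫⁻ a, ‖∑' i, F i a‖ₑ ∂μ ≤ ∫⁻ a, ∑' i, ‖F i a‖ₑ ∂μ :=
        lintegral_mono fun _ => enorm_tsum_le_tsum_enorm
    _ = ∑' i, ∫⁻ a, ‖F i a‖ₑ ∂μ := lintegral_tsum fun i => (hF i).enorm
    _ < ∞ := hF'.lt_top

theorem MeasureTheory.ae_summable_of_tsum_lintegral_enorm_ne_top {α E ι : Type*}
    [MeasurableSpace α] {μ : Measure α} [NormedAddCommGroup E] [Countable ι] {F : ι → α → E}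
    (hF : ∀ i, AEStronglyMeasurable (F i) μ) (hF' : ∑' i, ∫⁻ a, ‖F i a‖ₑ ∂μ ≠ ∞) :
    ∀ᵐ a ∂μ, Summable fun i => ‖F i a‖ :=
  summable_norm_of_tsum_eLpNorm_ne_top le_rfl hF (by simpa only [eLpNorm_one_eq_lintegral_enorm])

namespace MeasureTheory.IsProjectiveLimit

variable {ι : Type*} {X : ι → Type*} [∀ i, MeasurableSpace (X i)] {μ : ∀ i, Measure (X i)}
  {P : Measure (∀ i, X i)}

theorem measurePreserving_eval
    (hP : IsProjectiveLimit P fun s : Finset ι => Measure.pi fun i : s => μ i) (i : ι) :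
    MeasurePreserving (fun x => x i) P (μ i) := by
  let _ : Unique ({i} : Finset ι) :=
    ⟨⟨⟨i, Finset.mem_singleton_self i⟩⟩, fun ⟨j, hj⟩ => Subtype.ext (Finset.mem_singleton.1 hj)⟩
  have hmap : P.map (fun x => x i) = μ i := by
    have hcomp : (fun x : ∀ k, X k => x i) =
        (fun y : ∀ j : ({i} : Finset ι), X j => y default) ∘ Finset.restrict {i} := rfl
    rw [hcomp, ← Measure.map_map (measurable_pi_apply default) (Finset.measurable_restrict _),
      hP {i}]
    exact (measurePreserving_piUnique fun j : ({i} : Finset ι) => μ j).map_eq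
  exact ⟨measurable_pi_apply i, hmap⟩

theorem measurePreserving_piMap [∀ i, IsFiniteMeasure (μ i)]
    (hP : IsProjectiveLimit P fun s : Finset ι => Measure.pi fun i : s => μ i)
    {T : ∀ i, X i → X i} (hT : ∀ i, MeasurePreserving (T i) (μ i) (μ i)) :
    MeasurePreserving (fun x i => T i (x i)) P P := by
  have hmeas : Measurable fun (x : ∀ i, X i) i => T i (x i) :=
    measurable_pi_lambda _ fun i => (hT i).measurable.comp (measurable_pi_apply i)
  refine ⟨hmeas, IsProjectiveLimit.unique (fun s => ?_) hP⟩
  have hcomp : Finset.restrict s ∘ (fun (x : ∀ i, X i) i => T i (x i)) =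
      (fun (y : ∀ j : s, X j) (j : s) => T j (y j)) ∘ Finset.restrict s := rfl
  rw [Measure.map_map (Finset.measurable_restrict s) hmeas, hcomp,
    ← Measure.map_map (measurePreserving_pi _ _ fun j : s => hT j).measurable
      (Finset.measurable_restrict s), hP s]
  exact (measurePreserving_pi _ _ fun j : s => hT j).map_eq

theorem ae_eventually_eval_notMem {X : ℕ → Type*} [∀ i, MeasurableSpace (X i)]
    {μ : ∀ i, Measure (X i)} {P : Measure (∀ i, X i)}
    (hP : IsProjectiveLimit P fun s : Finset ℕ => Measure.pi fun i : s => μ i)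
    {B : ∀ i, Set (X i)} (hB : ∀ i, MeasurableSet (B i)) (hsum : ∑' i, μ i (B i) ≠ ∞) :
    ∀ᵐ x ∂P, ∀ᶠ i in atTop, x i ∉ B i := by
  refine ae_eventually_notMem (s := fun i => (fun x : ∀ k, X k => x i) ⁻¹' B i) ?_
  simpa only [(hP.measurePreserving_eval _).measure_preimage (hB _).nullMeasurableSet] using hsum

end MeasureTheory.IsProjectiveLimit

theorem ENNReal.tsum_ofReal_natCast_mul_half_pow_ne_top :
    ∑' m : ℕ, ENNReal.ofReal (m * (1 / 2 : ℝ) ^ m) ≠ ∞ := by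
  have hsum : Summable fun m : ℕ => (m : ℝ) * (1 / 2 : ℝ) ^ m := by
    simpa using summable_pow_mul_geometric_of_norm_lt_one (R := ℝ) 1
      (r := 1 / 2) (by norm_num)
  rw [← ENNReal.ofReal_tsum_of_nonneg (fun m => by positivity) hsum]
  exact ENNReal.ofReal_ne_top

theorem ENNReal.tsum_half_pow_ne_top : ∑' m : ℕ, (1 / 2 : ℝ≥0∞) ^ m ≠ ∞ := by
  rw [ENNReal.tsum_geometric, ne_eq, ENNReal.inv_eq_top, tsub_eq_zero_iff_le, not_le]
  norm_num

theorem MeasureTheory.lintegral_enorm_le_ofReal {α : Type*} [MeasurableSpace α] {μ : Measure α}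
    {f : α → ℝ} (hf : Integrable f μ) (h0 : ∀ a, 0 ≤ f a) {b : ℝ} (hb : ∫ a, f a ∂μ ≤ b) :
    ∫⁻ a, ‖f a‖ₑ ∂μ ≤ ENNReal.ofReal b := by
  rw [← ofReal_integral_norm_eq_lintegral_enorm hf]
  exact ENNReal.ofReal_le_ofReal (by simpa only [Real.norm_of_nonneg (h0 _)] using hb)

theorem tsum_lintegral_enorm_natCast_mul_comp_eval_ne_top {X : ℕ → Type*}
    [∀ m, MeasurableSpace (X m)] {μ : ∀ m, Measure (X m)} [∀ m, IsProbabilityMeasure (μ m)]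
    {P : Measure (∀ m, X m)}
    (hP : IsProjectiveLimit P fun s : Finset ℕ => Measure.pi fun i : s => μ i)
    {f : ∀ m, X m → ℝ} (hfmeas : ∀ m, Measurable (f m)) (hf0 : ∀ m x, 0 ≤ f m x)
    (hfbd : ∀ m, ∃ C : ℝ, ∀ x, f m x ≤ C) (hfL1 : ∀ m, ∫ x, f m x ∂(μ m) ≤ (1 / 2 : ℝ) ^ m) :
    ∑' m : ℕ, ∫⁻ x, ‖(m : ℝ) * f m (x m)‖ₑ ∂P ≠ ∞ := by
  refine ne_top_of_le_ne_top ENNReal.tsum_ofReal_natCast_mul_half_pow_ne_top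
    (ENNReal.tsum_le_tsum fun m => ?_)
  obtain ⟨C, hC⟩ := hfbd m
  have hint : Integrable (fun y => (m : ℝ) * f m y) (μ m) :=
    Integrable.of_bound ((hfmeas m).const_mul _).aestronglyMeasurable (m * C) <|
      ae_of_all _ fun y => by
        rw [Real.norm_of_nonneg (by have := hf0 m y; positivity)]
        exact mul_le_mul_of_nonneg_left (hC y) m.cast_nonneg
  rw [(hP.measurePreserving_eval m).lintegral_comp (f := fun y => ‖(m : ℝ) * f m y‖ₑ)
    ((hfmeas m).const_mul _).enorm]
  refine lintegral_enorm_le_ofReal hint (fun y => by have := hf0 m y; positivity) ?_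
  rw [integral_const_mul]
  exact mul_le_mul_of_nonneg_left (hfL1 m) m.cast_nonneg

theorem exists_lt_natCast_mul_of_eventually_le_iSup {a : ℕ → ℕ → ℝ}
    (h : ∀ᶠ m in atTop, ((1 - (1 / 2 : ℝ) ^ m : ℝ) : EReal) ≤ ⨆ n, (a m n : EReal)) (c : ℝ) :
    ∃ m n, c < m * a m n := by
  have hquarter : ∀ᶠ m in atTop, ∃ n, 1 / 4 < a m n := by
    filter_upwards [h, eventually_ge_atTop 1] with m hm hm1
    have hlt : ((1 / 4 : ℝ) : EReal) < ((1 - (1 / 2 : ℝ) ^ m : ℝ) : EReal) := by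
      have : (1 / 2 : ℝ) ^ m ≤ 1 / 2 := pow_le_of_le_one (by norm_num) (by norm_num) (by omega)
      exact EReal.coe_lt_coe_iff.2 (by linarith)
    obtain ⟨n, hn⟩ := lt_iSup_iff.1 (hlt.trans_le hm)
    exact ⟨n, EReal.coe_lt_coe_iff.1 hn⟩
  obtain ⟨m, ⟨n, hn⟩, hm⟩ := (hquarter.and (eventually_gt_atTop ⌈4 * c⌉₊)).exists
  have hcm : 4 * c < m := (Nat.le_ceil _).trans_lt (by exact_mod_cast hm)
  have hm0 : (0 : ℝ) < m := by exact_mod_cast (Nat.zero_le _).trans_lt hm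
  exact ⟨m, n, by nlinarith⟩

theorem iSup_sphAvg_tsum_eq_top {Ω ι : Type*} (S : FreeGroup (Fin 2) → Ω → Ω) (r : ℕ → ℕ)
    {u : ι → Ω → ℝ} (hu : ∀ i y, 0 ≤ u i y) {x : Ω}
    (hsum : ∀ g, Summable fun i => u i (S g⁻¹ x))
    (hunb : ∀ c : ℝ, ∃ i n, c < sphAvg S (r n) (u i) x) :
    ⨆ n, (sphAvg S (r n) (fun y => ∑' i, u i y) x : EReal) = ⊤ :=
  EReal.iSup_coe_eq_top_of_forall_exists_lt fun c =>
    let ⟨i, n, hc⟩ := hunb c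
    ⟨n, hc.trans_le (sphAvg_le_sphAvg_tsum S _ hu hsum i)⟩

theorem product_system_unbounded_averages_general
    (X : ℕ → Type) [∀ m, MeasurableSpace (X m)]
    (μ : ∀ m, Measure (X m)) [∀ m, IsProbabilityMeasure (μ m)]
    (T : ∀ m, FreeGroup (Fin 2) → X m → X m)
    (hTmp : ∀ m, ∀ g : FreeGroup (Fin 2), MeasurePreserving (T m g) (μ m) (μ m))
    (f : ∀ m, X m → ℝ)
    (hfmeas : ∀ m, Measurable (f m)) (hf0 : ∀ m x, 0 ≤ f m x)
    (hfbd : ∀ m, ∃ C : ℝ, ∀ x, f m x ≤ C)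
    (hfL1 : ∀ m, ∫ x, f m x ∂(μ m) ≤ (1 / 2 : ℝ) ^ m)
    (hfmax : ∀ m, μ m {x | ¬ ((1 - (1 / 2 : ℝ) ^ m : ℝ) : EReal) ≤
        ⨆ n : ℕ, ((sphAvg (T m) (2 * n) (f m) x : ℝ) : EReal)} ≤ (1 / 2 : ENNReal) ^ m)
    -- the product measure on `Π m, X m`, characterized by its finite marginals
    (μprod : Measure (∀ m, X m))
    (hmarg : ∀ s : Finset ℕ, μprod.map (fun x (i : s) => x i) =
      Measure.pi (fun i : s => μ i)) :
    Integrable (fun x : ∀ m, X m => ∑' m : ℕ, (m : ℝ) * f m (x m)) μprod ∧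
    ∀ᵐ x ∂μprod, (⨆ n : ℕ, ((sphAvg (fun g y m => T m g (y m)) (2 * n)
        (fun y : ∀ m, X m => ∑' m : ℕ, (m : ℝ) * f m (y m)) x : ℝ) : EReal)) = ⊤ := by
  have hP : IsProjectiveLimit μprod fun s : Finset ℕ => Measure.pi fun i : s => μ i := hmarg
  let u : ℕ → (∀ m, X m) → ℝ := fun m y => m * f m (y m)
  have hu0 : ∀ m y, 0 ≤ u m y := fun m y => mul_nonneg m.cast_nonneg (hf0 m (y m))
  have hu_meas : ∀ m, AEStronglyMeasurable (u m) μprod := fun m =>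
    (((hfmeas m).comp (measurable_pi_apply m)).const_mul _).aestronglyMeasurable
  have hu_L1 := tsum_lintegral_enorm_natCast_mul_comp_eval_ne_top hP hfmeas hf0 hfbd hfL1
  refine ⟨integrable_tsum hu_meas hu_L1, ?_⟩
  have horbit : ∀ᵐ x ∂μprod, ∀ g, Summable fun m => u m fun k => T k g⁻¹ (x k) := by
    have hsum : ∀ᵐ x ∂μprod, Summable fun m => u m x :=
      (ae_summable_of_tsum_lintegral_enorm_ne_top hu_meas hu_L1).mono fun x hx =>
        hx.of_norm
    exact ae_all_iff.2 fun g =>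
      (hP.measurePreserving_piMap fun m => hTmp m g⁻¹).quasiMeasurePreserving.ae hsum
  have hgood := hP.ae_eventually_eval_notMem
    (fun m => (measurableSet_le measurable_const
      (measurable_iSup_sphAvg _ (fun g => (hTmp m g).measurable) (hfmeas m) (2 * ·))).compl)
    (ne_top_of_le_ne_top ENNReal.tsum_half_pow_ne_top (ENNReal.tsum_le_tsum hfmax))
  filter_upwards [horbit, hgood] with x hx hev
  refine iSup_sphAvg_tsum_eq_top _ (2 * ·) hu0 hx fun c => ?_
  obtain ⟨m, n, hc⟩ := exists_lt_natCast_mul_of_eventually_le_iSup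
    (hev.mono fun m hm => not_not.1 hm) c
  exact ⟨m, n, by rwa [sphAvg_const_mul, sphAvg_pi_comp_eval]⟩

/-- Borel–Cantelli step: given for each `m` a probability-measure-preserving `F₂`-system
`(X_m, μ_m)` and non-negative `f_m ∈ L^∞(X_m)` with `‖f_m‖₁ ≤ 2^{−m}` and
`sup_n 𝒜_{2n} f_m ≥ 1 − 2^{−m}` off a set of measure `2^{−m}`, the function
`f = Σ_m m·f̃_m` on the product system (with the product measure, characterized by its
finite-dimensional marginals, and the coordinatewise `F₂`-action) lies in `L¹` and has
`sup_n 𝒜_{2n} f = +∞` almost everywhere. -/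
theorem product_system_unbounded_averages
    (X : ℕ → Type) [∀ m, MeasurableSpace (X m)]
    (μ : ∀ m, Measure (X m)) [∀ m, IsProbabilityMeasure (μ m)]
    (T : ∀ m, FreeGroup (Fin 2) → X m → X m)
    (hT1 : ∀ m, T m 1 = id)
    (hTmul : ∀ m, ∀ g h : FreeGroup (Fin 2), T m (g * h) = T m g ∘ T m h)
    (hTmp : ∀ m, ∀ g : FreeGroup (Fin 2), MeasurePreserving (T m g) (μ m) (μ m))
    (f : ∀ m, X m → ℝ)
    (hfmeas : ∀ m, Measurable (f m)) (hf0 : ∀ m x, 0 ≤ f m x)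
    (hfbd : ∀ m, ∃ C : ℝ, ∀ x, f m x ≤ C)
    (hfL1 : ∀ m, ∫ x, f m x ∂(μ m) ≤ (1 / 2 : ℝ) ^ m)
    (hfmax : ∀ m, μ m {x | ¬ ((1 - (1 / 2 : ℝ) ^ m : ℝ) : EReal) ≤
        ⨆ n : ℕ, ((sphAvg (T m) (2 * n) (f m) x : ℝ) : EReal)} ≤ (1 / 2 : ENNReal) ^ m)
    -- the product measure on `Π m, X m`, characterized by its finite marginals
    (μprod : Measure (∀ m, X m)) (hprob : IsProbabilityMeasure μprod)
    (hmarg : ∀ s : Finset ℕ, μprod.map (fun x (i : s) => x i) =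
      Measure.pi (fun i : s => μ i)) :
    Integrable (fun x : ∀ m, X m => ∑' m : ℕ, (m : ℝ) * f m (x m)) μprod ∧
    ∀ᵐ x ∂μprod, (⨆ n : ℕ, ((sphAvg (fun g y m => T m g (y m)) (2 * n)
        (fun y : ∀ m, X m => ∑' m : ℕ, (m : ℝ) * f m (y m)) x : ℝ) : EReal)) = ⊤ :=
  product_system_unbounded_averages_general X μ T hTmp f hfmeas hf0 hfbd hfL1 hfmax μprod hmarg
end
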